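/- Let α ∈ (ρ_c^0, 1) with α ≠ 1 − ρ_c^0 and β ∈ (1 − ρ_c^1, 1) with β ≠ ρ_c^1 (the transitional/canard parameter regions). Then for every δ > 0 there exists ε_0 > 0 such that for every ε ∈ (0, ε_0) and every twice continuously differentiable ρ : [0,1] → ℝ solving the stationary boundary value problem, the boundary densities satisfy |ρ(0) − (1 − k(ξ*)/(4 α k(0)))| < δ and |ρ(1) − k(ξ*)/(4 β k(1))| < δ. -/

import Mathlib

open Set

/-- The total flux `j(x) = -ε ρ'(x) + ρ(x)(1-ρ(x))` of a density profile `ρ` on `[0,1]`. -/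
noncomputable def flux (ε : ℝ) (ρ : ℝ → ℝ) (x : ℝ) : ℝ :=
  -ε * derivWithin ρ (Icc (0:ℝ) 1) x + ρ x * (1 - ρ x)

/-- `ρ` is a (twice continuously differentiable) solution of the stationary boundary value
problem: `(k j)' = 0` on `[0,1]`, `j(0) = α(1-ρ(0))`, `j(1) = β ρ(1)`. -/
def IsStatSol (k : ℝ → ℝ) (ε α β : ℝ) (ρ : ℝ → ℝ) : Prop :=
  ContDiffOn ℝ 2 ρ (Icc (0:ℝ) 1) ∧
  (∀ x ∈ Icc (0:ℝ) 1, derivWithin (fun y => k y * flux ε ρ y) (Icc (0:ℝ) 1) x = 0) ∧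
  flux ε ρ 0 = α * (1 - ρ 0) ∧
  flux ε ρ 1 = β * ρ 1

/-- `ρ_c^0 = (1/2)(1 - √(1 - k(ξ*)/k(0)))`. -/
noncomputable def rhoC0 (k : ℝ → ℝ) (ξs : ℝ) : ℝ :=
  1/2 * (1 - Real.sqrt (1 - k ξs / k 0))

/-- `ρ_c^1 = (1/2)(1 + √(1 - k(ξ*)/k(1)))`. -/
noncomputable def rhoC1 (k : ℝ → ℝ) (ξs : ℝ) : ℝ :=
  1/2 * (1 + Real.sqrt (1 - k ξs / k 1))

/-!
Since `(k j)' = 0`, the flux is `j = K / k` for a constant `K`, and `ρ` solves the Riccati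
equation `ε ρ' = ρ (1 - ρ) - K / k` with `ρ(0) = 1 - K / (α k(0))` and `ρ(1) = K / (β k(1))`,
so it suffices to show `K → k(ξ*) / 4` as `ε → 0`. Both bounds compare `ρ` with chords, using
that wherever `ρ = v` the equation reads `ε ρ' = v (1 - v) - K / k`.

If `K ≥ k(ξ*) / 4 + δ`, this is `≤ -κ < 0` for every `v` on a fixed window at `ξ*`, so for small
`ε` the solution falls there from below `1` to below `0`, and since `K > 0` it stays
nonpositive up to `x = 1`, contradicting `ρ(1) > 0`. If `K < k(ξ*) / 4`, the level `1/2` can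
only be crossed upwards, and `α > ρ_c^0`, `β > 1 - ρ_c^1` make `v (1 - v) - K / k` uniformly
positive on fixed windows at the two ends, for `v` between `min (1/2) α` and `1/2`, resp.
between `1/2` and `max (1/2) (1 - β)`. This lifts `ρ` from `ρ(0) ≥ min (1/2) α` to `1/2` near
`0`, and from `1/2` to `ρ(1) ≥ max (1/2) (1 - β)` near `1`, contradicting
`ρ(1) = K / (β k(1)) < max (1/2) (1 - β)`.
-/

open Filter Topology

theorem mul_one_sub_lt_mul_one_sub {r x : ℝ} (h₁ : r < x) (h₂ : x < 1 - r) :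
    r * (1 - r) < x * (1 - x) := by
  nlinarith [mul_pos (sub_pos.2 h₁) (sub_pos.2 h₂)]

theorem min_half_le_one_sub_div {m c α K : ℝ} (hc : 0 < c) (hα : 0 < α)
    (hgap : m / (4 * c) < min (1 / 2) α * (1 - min (1 / 2) α)) (hK : K < m / 4) :
    min (1 / 2) α ≤ 1 - K / (α * c) := by
  rw [div_lt_iff₀' (by positivity)] at hgap
  rw [le_sub_comm, div_le_iff₀ (by positivity)]
  have hlo : 0 ≤ 1 - min (1 / 2) α := by linarith [min_le_left (1 / 2) α]
  nlinarith [mul_le_mul_of_nonneg_right (min_le_right (1 / 2) α) hlo]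

theorem div_lt_max_half {m c β K : ℝ} (hc : 0 < c) (hβ : 0 < β)
    (hgap : m / (4 * c) < max (1 / 2) (1 - β) * (1 - max (1 / 2) (1 - β))) (hK : K < m / 4) :
    K / (β * c) < max (1 / 2) (1 - β) := by
  rw [div_lt_iff₀' (by positivity)] at hgap
  rw [div_lt_iff₀ (by positivity)]
  have hhi : 0 ≤ max (1 / 2) (1 - β) := by linarith [le_max_left (1 / 2) (1 - β)]
  nlinarith [mul_le_mul_of_nonneg_left (sub_le_comm.1 (le_max_right (1 / 2) (1 - β))) hhi]

theorem abs_div_sub_div_lt {a b c δ : ℝ} (hc : 0 < c) (h : |a - b| < δ * c) :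
    |a / c - b / c| < δ := by
  rwa [← sub_div, abs_div, abs_of_pos hc, div_lt_iff₀ hc]

theorem eventually_mul_lt (c : ℝ) {d : ℝ} (hd : 0 < d) : ∀ᶠ ε in 𝓝[>] (0:ℝ), ε * c < d :=
  nhdsWithin_le_nhds <| ((continuous_mul_const c).tendsto' 0 0 (zero_mul c)).eventually_lt_const hd

section Thresholds

variable {k : ℝ → ℝ} {ξs : ℝ}

theorem rhoC0_mul_one_sub (h0 : 0 < k 0) (hle : k ξs ≤ k 0) :
    rhoC0 k ξs * (1 - rhoC0 k ξs) = k ξs / (4 * k 0) := by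
  have hq : 0 ≤ 1 - k ξs / k 0 := by rw [sub_nonneg, div_le_one h0]; exact hle
  have : k ξs / (4 * k 0) = (1 - (1 - k ξs / k 0)) / 4 := by field_simp; ring
  rw [this, ← Real.sq_sqrt hq, rhoC0]
  ring

theorem rhoC1_mul_one_sub (h1 : 0 < k 1) (hle : k ξs ≤ k 1) :
    rhoC1 k ξs * (1 - rhoC1 k ξs) = k ξs / (4 * k 1) := by
  have hq : 0 ≤ 1 - k ξs / k 1 := by rw [sub_nonneg, div_le_one h1]; exact hle
  have : k ξs / (4 * k 1) = (1 - (1 - k ξs / k 1)) / 4 := by field_simp; ring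
  rw [this, ← Real.sq_sqrt hq, rhoC1]
  ring

theorem sqrt_one_sub_div_mem_Ioo {c : ℝ} (hk : 0 < k ξs) (hlt : k ξs < c) :
    Real.sqrt (1 - k ξs / c) ∈ Ioo 0 1 := by
  have hc := hk.trans hlt
  refine ⟨Real.sqrt_pos.2 ?_, (Real.sqrt_lt' one_pos).2 ?_⟩
  · rw [sub_pos, div_lt_one hc]; exact hlt
  · linarith [div_pos hk hc, one_pow (M := ℝ) 2]

theorem rhoC0_mem_Ioo (hk : 0 < k ξs) (h0 : k ξs < k 0) : rhoC0 k ξs ∈ Ioo 0 (1 / 2) := by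
  have := sqrt_one_sub_div_mem_Ioo hk h0
  constructor <;> unfold rhoC0 <;> linarith [this.1, this.2]

theorem rhoC1_mem_Ioo (hk : 0 < k ξs) (h1 : k ξs < k 1) : rhoC1 k ξs ∈ Ioo (1 / 2) 1 := by
  have := sqrt_one_sub_div_mem_Ioo hk h1
  constructor <;> unfold rhoC1 <;> linarith [this.1, this.2]

theorem div_lt_min_half_mul_one_sub (hk : 0 < k ξs) (h0 : k ξs < k 0) {α : ℝ}
    (hα : rhoC0 k ξs < α) :
    k ξs / (4 * k 0) < min (1 / 2) α * (1 - min (1 / 2) α) := by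
  have hr2 := (rhoC0_mem_Ioo hk h0).2
  rw [← rhoC0_mul_one_sub (hk.trans h0) h0.le]
  exact mul_one_sub_lt_mul_one_sub (lt_min hr2 hα) ((min_le_left _ _).trans_lt (by linarith))

theorem div_lt_max_half_mul_one_sub (hk : 0 < k ξs) (h1 : k ξs < k 1) {β : ℝ}
    (hβ : 1 - rhoC1 k ξs < β) :
    k ξs / (4 * k 1) < max (1 / 2) (1 - β) * (1 - max (1 / 2) (1 - β)) := by
  have hr := rhoC1_mul_one_sub (hk.trans h1) h1.le
  have hr2 := (rhoC1_mem_Ioo hk h1).1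
  have := mul_one_sub_lt_mul_one_sub (r := 1 - rhoC1 k ξs) (x := max (1 / 2) (1 - β))
    ((by linarith : 1 - rhoC1 k ξs < 1 / 2).trans_le (le_max_left _ _))
    (max_lt (by linarith) (by linarith))
  linarith

end Thresholds

def IsRiccatiSol (k : ℝ → ℝ) (ε K : ℝ) (ρ : ℝ → ℝ) : Prop :=
  ∀ x ∈ Icc (0:ℝ) 1, HasDerivWithinAt ρ ((ρ x * (1 - ρ x) - K / k x) / ε) (Icc 0 1) x

namespace IsRiccatiSol

variable {k ρ : ℝ → ℝ} {ε K a b lo hi c : ℝ}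

theorem continuousOn (h : IsRiccatiSol k ε K ρ) : ContinuousOn ρ (Icc 0 1) :=
  fun x hx => (h x hx).continuousWithinAt

theorem hasDerivWithinAt_Ici (h : IsRiccatiSol k ε K ρ) {x : ℝ} (hx : x ∈ Ico (0:ℝ) 1) :
    HasDerivWithinAt ρ ((ρ x * (1 - ρ x) - K / k x) / ε) (Ici x) x :=
  (h x (Ico_subset_Icc_self hx)).mono_of_mem_nhdsWithin (Icc_mem_nhdsGE_of_mem hx)

/-- The chord from `(a, lo)` to `(b, hi)` is a lower fence: wherever `ρ` meets it, `ρ'` exceeds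
its slope. -/
theorem le_apply_of_rate (h : IsRiccatiSol k ε K ρ) (hε : 0 < ε) (ha : 0 ≤ a) (hab : a < b)
    (hb : b ≤ 1) (hlohi : lo ≤ hi) (hρa : lo ≤ ρ a)
    (hrate : ∀ x ∈ Ico a b, ∀ v ∈ Icc lo hi,
      ε * (hi - lo) < (b - a) * (v * (1 - v) - K / k x)) :
    hi ≤ ρ b := by
  set s := (hi - lo) / (b - a)
  have hba : 0 < b - a := sub_pos.2 hab
  have hchord := image_le_of_deriv_right_lt_deriv_boundary' (f := fun x => lo + s * (x - a))
    (f' := fun _ => s) (B := ρ) (by fun_prop)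
    (fun x _ => ((((hasDerivAt_id x).sub_const a).const_mul s).const_add lo).hasDerivWithinAt
      |>.congr_deriv (by simp)) (by simpa using hρa) (h.continuousOn.mono (Icc_subset_Icc ha hb))
    (fun x hx => h.hasDerivWithinAt_Ici ⟨ha.trans hx.1, hx.2.trans_le hb⟩) ?_
    (right_mem_Icc.2 hab.le)
  · simpa [s, div_mul_cancel₀ _ hba.ne'] using hchord
  · intro x hx hcontact
    have hs : 0 ≤ s := div_nonneg (sub_nonneg.2 hlohi) hba.le
    have hsx : s * (x - a) ≤ hi - lo := by
      calc s * (x - a) ≤ s * (b - a) := by gcongr; exact hx.2.le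
        _ = hi - lo := div_mul_cancel₀ _ hba.ne'
    have hv := hrate x hx (ρ x) ⟨by nlinarith [hx.1], by linarith⟩
    rw [lt_div_iff₀ hε, div_mul_eq_mul_div, div_lt_iff₀ hba]
    linarith

theorem apply_le_of_rate (h : IsRiccatiSol k ε K ρ) (hε : 0 < ε) (ha : 0 ≤ a) (hab : a < b)
    (hb : b ≤ 1) (hlohi : lo ≤ hi) (hρa : ρ a ≤ hi)
    (hrate : ∀ x ∈ Ico a b, ∀ v ∈ Icc lo hi,
      (b - a) * (v * (1 - v) - K / k x) < -(ε * (hi - lo))) :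
    ρ b ≤ lo := by
  set s := (hi - lo) / (b - a)
  have hba : 0 < b - a := sub_pos.2 hab
  have hchord := image_le_of_deriv_right_lt_deriv_boundary' (B := fun x => hi - s * (x - a))
    (B' := fun _ => -s) (h.continuousOn.mono (Icc_subset_Icc ha hb))
    (fun x hx => h.hasDerivWithinAt_Ici ⟨ha.trans hx.1, hx.2.trans_le hb⟩) (by simpa using hρa)
    (by fun_prop)
    (fun x _ => ((((hasDerivAt_id x).sub_const a).const_mul s).const_sub hi).hasDerivWithinAt
      |>.congr_deriv (by simp)) ?_ (right_mem_Icc.2 hab.le)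
  · simpa [s, div_mul_cancel₀ _ hba.ne'] using hchord
  · intro x hx hcontact
    have hs : 0 ≤ s := div_nonneg (sub_nonneg.2 hlohi) hba.le
    have hsx : s * (x - a) ≤ hi - lo := by
      calc s * (x - a) ≤ s * (b - a) := by gcongr; exact hx.2.le
        _ = hi - lo := div_mul_cancel₀ _ hba.ne'
    have hv := hrate x hx (ρ x) ⟨by linarith, by nlinarith [hx.1]⟩
    rw [div_lt_iff₀ hε, neg_mul, div_mul_eq_mul_div, lt_neg, div_lt_iff₀ hba]
    linarith

theorem le_apply_of_lt (h : IsRiccatiSol k ε K ρ) (hε : 0 < ε) (ha : 0 ≤ a) (hab : a < b)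
    (hb : b ≤ 1) (hρa : c ≤ ρ a) (hK : ∀ x ∈ Ico a b, K / k x < c * (1 - c)) : c ≤ ρ b :=
  h.le_apply_of_rate hε ha hab hb le_rfl hρa fun x hx v hv => by
    obtain rfl : v = c := le_antisymm hv.2 hv.1
    simpa using mul_pos (sub_pos.2 hab) (sub_pos.2 (hK x hx))

theorem apply_le_of_lt (h : IsRiccatiSol k ε K ρ) (hε : 0 < ε) (ha : 0 ≤ a) (hab : a < b)
    (hb : b ≤ 1) (hρa : ρ a ≤ c) (hK : ∀ x ∈ Ico a b, c * (1 - c) < K / k x) : ρ b ≤ c :=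
  h.apply_le_of_rate hε ha hab hb le_rfl hρa fun x hx v hv => by
    obtain rfl : v = c := le_antisymm hv.2 hv.1
    simpa using mul_neg_of_pos_of_neg (sub_pos.2 hab) (sub_neg.2 (hK x hx))

theorem eventually_apply_one_nonpos {ξ δ : ℝ} (hk : ContinuousAt k ξ) (hξ : ξ ∈ Ioo (0:ℝ) 1)
    (hkpos : ∀ x ∈ Icc (0:ℝ) 1, 0 < k x) (hδ : 0 < δ) :
    ∀ᶠ ε in 𝓝[>] 0, ∀ K ρ, IsRiccatiSol k ε K ρ → k ξ / 4 + δ ≤ K → ρ 0 ≤ 1 → ρ 1 ≤ 0 := by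
  have hkξ := hkpos ξ (Ioo_subset_Icc_self hξ)
  set κ := δ / (2 * k ξ)
  have hκ : 0 < κ := by positivity
  have hκξ : 1 / 4 + κ < (k ξ / 4 + δ) / k ξ := by
    rw [lt_div_iff₀ hkξ]
    simp only [κ]
    field_simp
    linarith
  have hwin : ∀ᶠ x in 𝓝 ξ, 1 / 4 + κ < (k ξ / 4 + δ) / k x ∧ x < 1 :=
    ((continuousAt_const.div hk hkξ.ne').eventually_const_lt hκξ).and (eventually_lt_nhds hξ.2)
  obtain ⟨u, hξu, hu⟩ := mem_nhdsGE_iff_exists_Icc_subset.1 (nhdsWithin_le_nhds hwin)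
  filter_upwards [self_mem_nhdsWithin, eventually_mul_lt (1 - 0) (mul_pos (sub_pos.2 hξu) hκ)]
    with ε (hε : 0 < ε) hεu K ρ hρ hK hρ0
  have hKk : ∀ x ∈ Icc (0:ℝ) 1, 0 < K / k x := fun x hx =>
    div_pos (by linarith) (hkpos x hx)
  have hu1 : u < 1 := (hu (right_mem_Icc.2 hξu.le)).2
  have hρξ : ρ ξ ≤ 1 := hρ.apply_le_of_lt hε le_rfl hξ.1 hξ.2.le hρ0 fun x hx => by
    simpa using hKk x ⟨hx.1, hx.2.le.trans hξ.2.le⟩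
  have hρu : ρ u ≤ 0 := by
    refine hρ.apply_le_of_rate hε hξ.1.le hξu hu1.le zero_le_one hρξ fun x hx v _ => ?_
    have hx01 : x ∈ Icc (0:ℝ) 1 := ⟨hξ.1.le.trans hx.1, hx.2.le.trans hu1.le⟩
    have hKx : (k ξ / 4 + δ) / k x ≤ K / k x := by gcongr; exact (hkpos x hx01).le
    have hrate : v * (1 - v) - K / k x < -κ := by
      nlinarith [sq_nonneg (v - 1 / 2), (hu (Ico_subset_Icc_self hx)).1]
    nlinarith [mul_lt_mul_of_pos_left hrate (sub_pos.2 hξu)]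
  exact hρ.apply_le_of_lt hε (hξ.1.le.trans hξu.le) hu1 le_rfl hρu fun x hx => by
    simpa using hKk x ⟨hξ.1.le.trans (hξu.le.trans hx.1), hx.2.le⟩

theorem exists_eventually_half_le {m lo : ℝ} (hk0 : ContinuousAt k 0)
    (hkpos : ∀ x ∈ Icc (0:ℝ) 1, 0 < k x) (hlo : lo ≤ 1 / 2)
    (hgap : m / (4 * k 0) < lo * (1 - lo)) :
    ∃ η ∈ Ioo (0:ℝ) (1 / 2), ∀ᶠ ε in 𝓝[>] 0,
      ∀ K ρ, IsRiccatiSol k ε K ρ → K ≤ m / 4 → lo ≤ ρ 0 → 1 / 2 ≤ ρ η := by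
  have hk00 := hkpos 0 (left_mem_Icc.2 zero_le_one)
  set γ := (lo * (1 - lo) - m / (4 * k 0)) / 2 with hγ_def
  have hγ : 0 < γ := by linarith
  have hwin : ∀ᶠ x in 𝓝 0, m / (4 * k x) < m / (4 * k 0) + γ ∧ x < 1 / 2 :=
    ((continuousAt_const.div (continuousAt_const.mul hk0)
      (mul_pos four_pos hk00).ne').eventually_lt_const (lt_add_of_pos_right _ hγ)).and
      (eventually_lt_nhds (by norm_num))
  obtain ⟨η, hη, hηs⟩ := mem_nhdsGE_iff_exists_Icc_subset.1 (nhdsWithin_le_nhds hwin)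
  have hη2 : η < 1 / 2 := (hηs (right_mem_Icc.2 hη.le)).2
  refine ⟨η, ⟨hη, hη2⟩, ?_⟩
  filter_upwards [self_mem_nhdsWithin, eventually_mul_lt (1 / 2 - lo) (mul_pos hη hγ)]
    with ε (hε : 0 < ε) hεη K ρ hρ hK hρ0
  refine hρ.le_apply_of_rate hε le_rfl hη (by linarith) hlo hρ0 fun x hx v hv => ?_
  have hkx := hkpos x ⟨hx.1, by linarith [hx.2]⟩
  have hKx : K / k x ≤ m / (4 * k x) := by rw [← div_div]; gcongr
  have hv : lo * (1 - lo) ≤ v * (1 - v) := by nlinarith [hv.1, hv.2]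
  have hrate : γ < v * (1 - v) - K / k x := by
    linarith [(hηs (Ico_subset_Icc_self hx)).1]
  calc ε * (1 / 2 - lo) < η * γ := hεη
    _ ≤ (η - 0) * (v * (1 - v) - K / k x) := by rw [sub_zero]; gcongr

theorem exists_eventually_le_apply_one {m hi : ℝ} (hk1 : ContinuousAt k 1)
    (hkpos : ∀ x ∈ Icc (0:ℝ) 1, 0 < k x) (hhi : 1 / 2 ≤ hi)
    (hgap : m / (4 * k 1) < hi * (1 - hi)) :
    ∃ l ∈ Ioo (1 / 2 : ℝ) 1, ∀ᶠ ε in 𝓝[>] 0,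
      ∀ K ρ, IsRiccatiSol k ε K ρ → K ≤ m / 4 → 1 / 2 ≤ ρ l → hi ≤ ρ 1 := by
  have hk11 := hkpos 1 (right_mem_Icc.2 zero_le_one)
  set γ := (hi * (1 - hi) - m / (4 * k 1)) / 2 with hγ_def
  have hγ : 0 < γ := by linarith
  have hwin : ∀ᶠ x in 𝓝 1, m / (4 * k x) < m / (4 * k 1) + γ ∧ 1 / 2 < x :=
    ((continuousAt_const.div (continuousAt_const.mul hk1)
      (mul_pos four_pos hk11).ne').eventually_lt_const (lt_add_of_pos_right _ hγ)).and
      (eventually_gt_nhds (by norm_num))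
  obtain ⟨l, hl, hls⟩ := mem_nhdsLE_iff_exists_Icc_subset.1 (nhdsWithin_le_nhds hwin)
  have hl2 : 1 / 2 < l := (hls (left_mem_Icc.2 hl.le)).2
  refine ⟨l, ⟨hl2, hl⟩, ?_⟩
  filter_upwards [self_mem_nhdsWithin,
    eventually_mul_lt (hi - 1 / 2) (mul_pos (sub_pos.2 hl) hγ)]
    with ε (hε : 0 < ε) hεl K ρ hρ hK hρl
  refine hρ.le_apply_of_rate hε (by linarith) hl le_rfl hhi hρl fun x hx v hv => ?_
  have hkx := hkpos x ⟨by linarith [hx.1], hx.2.le⟩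
  have hKx : K / k x ≤ m / (4 * k x) := by rw [← div_div]; gcongr
  have hv : hi * (1 - hi) ≤ v * (1 - v) := by nlinarith [hv.1, hv.2]
  have hrate : γ < v * (1 - v) - K / k x := by
    linarith [(hls (Ico_subset_Icc_self hx)).1]
  calc ε * (hi - 1 / 2) < (1 - l) * γ := hεl
    _ ≤ (1 - l) * (v * (1 - v) - K / k x) := by gcongr

theorem eventually_le_apply_one {m lo hi : ℝ} (hk0 : ContinuousAt k 0) (hk1 : ContinuousAt k 1)
    (hkpos : ∀ x ∈ Icc (0:ℝ) 1, 0 < k x) (hmk : ∀ x ∈ Icc (0:ℝ) 1, m ≤ k x)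
    (hlo : lo ≤ 1 / 2) (hlo' : m / (4 * k 0) < lo * (1 - lo))
    (hhi : 1 / 2 ≤ hi) (hhi' : m / (4 * k 1) < hi * (1 - hi)) :
    ∀ᶠ ε in 𝓝[>] 0, ∀ K ρ, IsRiccatiSol k ε K ρ → K < m / 4 → lo ≤ ρ 0 → hi ≤ ρ 1 := by
  obtain ⟨η, hη, h0⟩ := exists_eventually_half_le hk0 hkpos hlo hlo'
  obtain ⟨l, hl, h1⟩ := exists_eventually_le_apply_one hk1 hkpos hhi hhi'
  filter_upwards [self_mem_nhdsWithin, h0, h1] with ε (hε : 0 < ε) h0 h1 K ρ hρ hK hρ0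
  refine h1 K ρ hρ hK.le (hρ.le_apply_of_lt hε hη.1.le (hη.2.trans hl.1) hl.2.le
    (h0 K ρ hρ hK.le hρ0) fun x hx => ?_)
  have hx01 : x ∈ Icc (0:ℝ) 1 := ⟨hη.1.le.trans hx.1, hx.2.le.trans hl.2.le⟩
  rw [div_lt_iff₀ (hkpos x hx01)]
  linarith [hmk x hx01]

end IsRiccatiSol

namespace IsStatSol

variable {k ρ : ℝ → ℝ} {ε α β : ℝ}

theorem mul_flux_eq (hk : DifferentiableOn ℝ k (Icc 0 1)) (h : IsStatSol k ε α β ρ) {x : ℝ}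
    (hx : x ∈ Icc (0:ℝ) 1) : k x * flux ε ρ x = k 0 * flux ε ρ 0 := by
  obtain ⟨hρ, hconst, -, -⟩ := h
  have hρ' : DifferentiableOn ℝ (derivWithin ρ (Icc 0 1)) (Icc 0 1) :=
    (hρ.derivWithin (uniqueDiffOn_Icc one_pos)
      (by norm_num : (1 : WithTop ℕ∞) + 1 ≤ 2)).differentiableOn one_ne_zero
  have hρd : DifferentiableOn ℝ ρ (Icc 0 1) := hρ.differentiableOn (by norm_num)
  have hflux : DifferentiableOn ℝ (flux ε ρ) (Icc 0 1) :=
    ((differentiableOn_const _).mul hρ').add (hρd.mul ((differentiableOn_const _).sub hρd))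
  exact constant_of_derivWithin_zero (hk.mul hflux)
    (fun y hy => hconst y (Ico_subset_Icc_self hy)) x hx

theorem isRiccatiSol (hk : DifferentiableOn ℝ k (Icc 0 1)) (hk0 : ∀ x ∈ Icc (0:ℝ) 1, k x ≠ 0)
    (hε : ε ≠ 0) (h : IsStatSol k ε α β ρ) : IsRiccatiSol k ε (k 0 * flux ε ρ 0) ρ := by
  intro x hx
  have hρd : DifferentiableWithinAt ℝ ρ (Icc 0 1) x := h.1.differentiableOn (by norm_num) x hx
  refine hρd.hasDerivWithinAt.congr_deriv ?_
  rw [← h.mul_flux_eq hk hx, mul_div_cancel_left₀ _ (hk0 x hx), flux]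
  field_simp
  ring

theorem apply_zero_eq (hα : α ≠ 0) (hk0 : k 0 ≠ 0) (h : IsStatSol k ε α β ρ) :
    ρ 0 = 1 - k 0 * flux ε ρ 0 / (α * k 0) := by
  rw [h.2.2.1]
  field_simp
  ring

theorem apply_one_eq (hk : DifferentiableOn ℝ k (Icc 0 1)) (hβ : β ≠ 0) (hk1 : k 1 ≠ 0)
    (h : IsStatSol k ε α β ρ) : ρ 1 = k 0 * flux ε ρ 0 / (β * k 1) := by
  rw [← h.mul_flux_eq hk (right_mem_Icc.2 zero_le_one), h.2.2.2]
  field_simp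

theorem abs_boundary_sub_lt (hk : DifferentiableOn ℝ k (Icc 0 1)) (hα : 0 < α) (hβ : 0 < β)
    (hk0 : 0 < k 0) (hk1 : 0 < k 1) (h : IsStatSol k ε α β ρ) {m δ : ℝ} (hδ : 0 ≤ δ)
    (hK : |k 0 * flux ε ρ 0 - m / 4| < δ * min (α * k 0) (β * k 1)) :
    |ρ 0 - (1 - m / (4 * α * k 0))| < δ ∧ |ρ 1 - m / (4 * β * k 1)| < δ := by
  rw [h.apply_zero_eq hα.ne' hk0.ne', h.apply_one_eq hk hβ.ne' hk1.ne']
  constructor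
  · rw [show ∀ K : ℝ, 1 - K / (α * k 0) - (1 - m / (4 * α * k 0))
        = m / 4 / (α * k 0) - K / (α * k 0) from fun K => by ring]
    refine abs_div_sub_div_lt (mul_pos hα hk0) ?_
    rw [abs_sub_comm]
    exact hK.trans_le (mul_le_mul_of_nonneg_left (min_le_left _ _) hδ)
  · rw [show m / (4 * β * k 1) = m / 4 / (β * k 1) by ring]
    exact abs_div_sub_div_lt (mul_pos hβ hk1)
      (hK.trans_le (mul_le_mul_of_nonneg_left (min_le_right _ _) hδ))

theorem eventually_abs_mul_flux_sub_lt {ξs δ : ℝ} (hk : Differentiable ℝ k)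
    (hkpos : ∀ x ∈ Icc (0:ℝ) 1, 0 < k x) (hξs : ξs ∈ Ioo (0:ℝ) 1)
    (hmk : ∀ x ∈ Icc (0:ℝ) 1, k ξs ≤ k x) (h0 : k ξs < k 0) (h1 : k ξs < k 1)
    (hα : rhoC0 k ξs < α) (hβ : 1 - rhoC1 k ξs < β) (hδ : 0 < δ) :
    ∀ᶠ ε in 𝓝[>] 0, ∀ ρ, IsStatSol k ε α β ρ → |k 0 * flux ε ρ 0 - k ξs / 4| < δ := by
  have hm := hkpos ξs (Ioo_subset_Icc_self hξs)
  have hk0 := hm.trans h0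
  have hk1 := hm.trans h1
  have hαpos : 0 < α := (rhoC0_mem_Ioo hm h0).1.trans hα
  have hβpos : 0 < β := by linarith [(rhoC1_mem_Ioo hm h1).2]
  have hlo := div_lt_min_half_mul_one_sub hm h0 hα
  have hhi := div_lt_max_half_mul_one_sub hm h1 hβ
  filter_upwards [self_mem_nhdsWithin,
    IsRiccatiSol.eventually_apply_one_nonpos hk.continuous.continuousAt hξs hkpos hδ,
    IsRiccatiSol.eventually_le_apply_one hk.continuous.continuousAt hk.continuous.continuousAt
      hkpos hmk (min_le_left _ _) hlo (le_max_left _ _) hhi]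
    with ε (hε : 0 < ε) hupper hlower ρ hρ
  have hR := hρ.isRiccatiSol hk.differentiableOn (fun x hx => (hkpos x hx).ne') hε.ne'
  have hρ0 := hρ.apply_zero_eq hαpos.ne' hk0.ne'
  have hρ1 := hρ.apply_one_eq hk.differentiableOn hβpos.ne' hk1.ne'
  set K := k 0 * flux ε ρ 0
  rw [abs_sub_lt_iff]
  constructor
  · by_contra! hK
    have hKpos : 0 < K := by linarith
    have := hupper K ρ hR (by linarith)
      (by rw [hρ0]; linarith [div_pos hKpos (mul_pos hαpos hk0)])
    rw [hρ1] at this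
    linarith [div_pos hKpos (mul_pos hβpos hk1)]
  · by_contra! hK
    have hρ0lo := hρ0 ▸ min_half_le_one_sub_div hk0 hαpos hlo (by linarith)
    linarith [hρ1 ▸ div_lt_max_half hk1 hβpos hhi (by linarith),
      hlower K ρ hR (by linarith) hρ0lo]

end IsStatSol

theorem bvp_boundary_densities_canard_regime_general
    (k : ℝ → ℝ) (ξs : ℝ)
    (hk : ContDiff ℝ 2 k)
    (hkpos : ∀ x ∈ Icc (0:ℝ) 1, 0 < k x)
    (hξs : ξs ∈ Ioo (0:ℝ) 1)
    (hmin : ∀ x ∈ Icc (0:ℝ) 1, x ≠ ξs → k ξs < k x)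
    (α β : ℝ)
    (hα1 : rhoC0 k ξs < α)
    (hβ1 : 1 - rhoC1 k ξs < β) :
    ∀ δ > 0, ∃ ε₀ > 0, ∀ ε : ℝ, 0 < ε → ε < ε₀ →
      ∀ ρ : ℝ → ℝ, IsStatSol k ε α β ρ →
        |ρ 0 - (1 - k ξs / (4 * α * k 0))| < δ ∧
        |ρ 1 - k ξs / (4 * β * k 1)| < δ := by
  intro δ hδ
  have hk' : Differentiable ℝ k := hk.differentiable two_ne_zero
  have hm := hkpos ξs (Ioo_subset_Icc_self hξs)
  have hmk : ∀ x ∈ Icc (0:ℝ) 1, k ξs ≤ k x := fun x hx =>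
    (eq_or_ne x ξs).elim (fun h => h ▸ le_rfl) fun h => (hmin x hx h).le
  have h0 : k ξs < k 0 := hmin 0 (left_mem_Icc.2 zero_le_one) hξs.1.ne
  have h1 : k ξs < k 1 := hmin 1 (right_mem_Icc.2 zero_le_one) hξs.2.ne'
  have hα : 0 < α := (rhoC0_mem_Ioo hm h0).1.trans hα1
  have hβ : 0 < β := by linarith [(rhoC1_mem_Ioo hm h1).2]
  obtain ⟨ε₀, hε₀, hsub⟩ := mem_nhdsGT_iff_exists_Ioo_subset.1
    (IsStatSol.eventually_abs_mul_flux_sub_lt hk' hkpos hξs hmk h0 h1 hα1 hβ1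
      (mul_pos hδ (lt_min (mul_pos hα (hm.trans h0)) (mul_pos hβ (hm.trans h1)))))
  exact ⟨ε₀, hε₀, fun ε hε hεε₀ ρ hρ => hρ.abs_boundary_sub_lt hk'.differentiableOn hα hβ
    (hm.trans h0) (hm.trans h1) hδ.le (hsub ⟨hε, hεε₀⟩ ρ hρ)⟩

/-- In the transitional/canard parameter regions
(`ρ_c^0 < α < 1`, `α ≠ 1 - ρ_c^0`; `1 - ρ_c^1 < β < 1`, `β ≠ ρ_c^1`), the boundary
densities of any solution of the stationary boundary value problem converge, as `ε → 0`,
to `ρ(0) → 1 - k(ξ*)/(4αk(0))` and `ρ(1) → k(ξ*)/(4βk(1))`. -/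
theorem bvp_boundary_densities_canard_regime
    (k : ℝ → ℝ) (ξs : ℝ)
    (hk : ContDiff ℝ 2 k)
    (hkpos : ∀ x ∈ Icc (0:ℝ) 1, 0 < k x)
    (hξs : ξs ∈ Ioo (0:ℝ) 1)
    (hmin : ∀ x ∈ Icc (0:ℝ) 1, x ≠ ξs → k ξs < k x)
    (hk's : deriv k ξs = 0)
    (hk''s : 0 < deriv (deriv k) ξs)
    (α β : ℝ)
    (hα1 : rhoC0 k ξs < α) (hα2 : α < 1) (hα3 : α ≠ 1 - rhoC0 k ξs)
    (hβ1 : 1 - rhoC1 k ξs < β) (hβ2 : β < 1) (hβ3 : β ≠ rhoC1 k ξs) :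
    ∀ δ > 0, ∃ ε₀ > 0, ∀ ε : ℝ, 0 < ε → ε < ε₀ →
      ∀ ρ : ℝ → ℝ, IsStatSol k ε α β ρ →
        |ρ 0 - (1 - k ξs / (4 * α * k 0))| < δ ∧
        |ρ 1 - k ξs / (4 * β * k 1)| < δ :=
  bvp_boundary_densities_canard_regime_general k ξs hk hkpos hξs hmin α β hα1 hβ1
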